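/- Let w* minimize the objective L_OAT(w) = E[max(0, 1 - y·w^⊤x + ε‖w‖₁)] + (λ/2)‖w‖₂² (optimal adversarial training), over a distribution with E[xᵢ|y] = yμᵢ and conditionally independent features. If feature i is non-robust, i.e. |μᵢ| ≤ ε, then wᵢ* = 0. -/

import Mathlib

/-!
Setting a non-robust weight `wᵢ` to zero lowers the regulariser by `λ/2 · wᵢ²` and does not
increase the hinge term. Indeed, given the label `s`, the feature `xᵢ` is independent of the
others, so by Fubini and Jensen (convexity of `max 0`) averaging the hinge over `xᵢ` gives at
least the hinge with `xᵢ` replaced by its mean `s μᵢ`; what `wᵢ` then contributes is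
`ε|wᵢ| - wᵢ μᵢ ≥ 0`, which can only be dropped. A minimiser must therefore have `wᵢ = 0`.
-/

open MeasureTheory Finset
open scoped ENNReal

/-- The joint distribution of `(x,y)` on `ℝ^d × {-1,1}`: with probability `q` the label is `1`
and the features are drawn from the product measure `Measure.pi ηp` (features conditionally
independent given the label), with probability `1-q` the label is `-1` and the features are
drawn from `Measure.pi ηn`. -/
noncomputable def jointMeasure {d : ℕ} (ηp ηn : Fin d → Measure ℝ) (q : ℝ≥0∞) :
    Measure ((Fin d → ℝ) × ℝ) :=
  q • (Measure.pi ηp).map (fun x => (x, (1 : ℝ))) +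
    (1 - q) • (Measure.pi ηn).map (fun x => (x, (-1 : ℝ)))

/-- The regularized soft-SVM objective. -/
noncomputable def svmLoss {d : ℕ} (μ : Measure ((Fin d → ℝ) × ℝ)) (lam : ℝ)
    (w : Fin d → ℝ) : ℝ :=
  (∫ p, max 0 (1 - p.2 * ∑ i, w i * p.1 i) ∂μ) + lam / 2 * ∑ i, (w i) ^ 2

/-- The optimal adversarial training (OAT) objective: the worst-case ℓ∞ perturbation of
budget `ε` is substituted into the adversarial hinge loss, giving
`L_OAT(w) = E[max(0, 1 - y·wᵀx + ε‖w‖₁)] + (λ/2)‖w‖₂²`. -/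
noncomputable def oatLoss {d : ℕ} (μ : Measure ((Fin d → ℝ) × ℝ)) (lam ε : ℝ)
    (w : Fin d → ℝ) : ℝ :=
  (∫ p, max 0 (1 - p.2 * (∑ i, w i * p.1 i) + ε * ∑ i, |w i|) ∂μ) +
    lam / 2 * ∑ i, (w i) ^ 2

open Function

def oatHingeArg {d : ℕ} (ε s : ℝ) (w x : Fin d → ℝ) : ℝ :=
  1 - s * (∑ j, w j * x j) + ε * ∑ j, |w j|

theorem max_zero_integral_le_integral_max_zero {α : Type*} [MeasurableSpace α] {μ : Measure α}
    {f : α → ℝ} (hf : Integrable f μ) :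
    max 0 (∫ x, f x ∂μ) ≤ ∫ x, max 0 (f x) ∂μ :=
  max_le (integral_nonneg fun _ => le_max_left _ _)
    (integral_mono hf ((integrable_zero _ _ _).sup hf) fun _ => le_max_right _ _)

theorem integral_max_zero_le_integral_max_zero_prod {β : Type*} [MeasurableSpace β]
    {ν : Measure ℝ} [IsProbabilityMeasure ν] {π : Measure β} [IsFiniteMeasure π]
    (hν : Integrable (fun t : ℝ => t) ν) {Ψ : β → ℝ} (hΨ : Integrable Ψ π) {b c : ℝ}
    (hbc : b * ∫ t, t ∂ν ≤ c) :
    ∫ r, max 0 (Ψ r) ∂π ≤ ∫ y, max 0 (Ψ y.2 + (c - b * y.1)) ∂ν.prod π := by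
  have hlin : Integrable (fun t => c - b * t) ν := (integrable_const c).sub (hν.const_mul b)
  have hprod : Integrable (fun y : ℝ × β => max 0 (Ψ y.2 + (c - b * y.1))) (ν.prod π) :=
    (integrable_zero _ _ _).sup ((hΨ.comp_snd ν).add ((integrable_const c).sub
      ((hν.comp_fst π).const_mul b)))
  rw [integral_prod_symm _ hprod]
  refine integral_mono ((integrable_zero _ _ _).sup hΨ) hprod.integral_prod_right fun r => ?_
  have hmean : ∫ t, Ψ r + (c - b * t) ∂ν = Ψ r + (c - b * ∫ t, t ∂ν) := by
    rw [integral_add (integrable_const _) hlin, integral_sub (integrable_const c) (hν.const_mul b),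
      integral_const_mul]
    simp
  calc max 0 (Ψ r) ≤ max 0 (∫ t, Ψ r + (c - b * t) ∂ν) := by
        gcongr
        linarith
    _ ≤ ∫ t, max 0 (Ψ r + (c - b * t)) ∂ν :=
        max_zero_integral_le_integral_max_zero ((integrable_const _).add hlin)

theorem integral_max_zero_le_integral_max_zero_pi {n : ℕ} {η : Fin (n + 1) → Measure ℝ}
    [∀ j, IsProbabilityMeasure (η j)] (i : Fin (n + 1)) (hη : Integrable (fun t : ℝ => t) (η i))
    {Ψ : (Fin n → ℝ) → ℝ} (hΨ : Integrable Ψ (Measure.pi fun j => η (i.succAbove j)))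
    {b c : ℝ} (hbc : b * ∫ t, t ∂η i ≤ c) :
    ∫ x, max 0 (Ψ (i.removeNth x)) ∂Measure.pi η ≤
      ∫ x, max 0 (Ψ (i.removeNth x) + (c - b * x i)) ∂Measure.pi η := by
  have he := measurePreserving_piFinSuccAbove η i
  calc ∫ x, max 0 (Ψ (i.removeNth x)) ∂Measure.pi η
      = ∫ r, max 0 (Ψ r) ∂Measure.pi fun j => η (i.succAbove j) := by
        have h := he.integral_comp' (fun y => max 0 (Ψ y.2))
        rwa [integral_fun_snd (fun r => max 0 (Ψ r)), probReal_univ, one_smul] at h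
    _ ≤ ∫ y, max 0 (Ψ y.2 + (c - b * y.1)) ∂(η i).prod (Measure.pi fun j => η (i.succAbove j)) :=
        integral_max_zero_le_integral_max_zero_prod hη hΨ hbc
    _ = _ := (he.integral_comp' (fun y => max 0 (Ψ y.2 + (c - b * y.1)))).symm

theorem oatHingeArg_eq_removeNth_add {n : ℕ} (ε s : ℝ) (w x : Fin (n + 1) → ℝ) (i : Fin (n + 1)) :
    oatHingeArg ε s w x =
      oatHingeArg ε s (i.removeNth w) (i.removeNth x) + (ε * |w i| - s * w i * x i) := by
  simp only [oatHingeArg, Fin.sum_univ_succAbove _ i, Fin.removeNth]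
  ring

theorem oatHingeArg_update_zero {n : ℕ} (ε s : ℝ) (w x : Fin (n + 1) → ℝ) (i : Fin (n + 1)) :
    oatHingeArg ε s (update w i 0) x = oatHingeArg ε s (i.removeNth w) (i.removeNth x) := by
  simp [oatHingeArg_eq_removeNth_add ε s (update w i 0) x i]

theorem integrable_oatHingeArg {d : ℕ} {η : Fin d → Measure ℝ} [∀ j, IsFiniteMeasure (η j)]
    (hη : ∀ j, Integrable (fun t : ℝ => t) (η j)) (ε s : ℝ) (w : Fin d → ℝ) :
    Integrable (oatHingeArg ε s w) (Measure.pi η) :=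
  ((integrable_const 1).sub ((integrable_finsetSum _ fun j _ =>
    (integrable_comp_eval (f := fun t => t) (hη j)).const_mul (w j)).const_mul s)).add
    (integrable_const _)

theorem integral_max_zero_oatHingeArg_update_zero_le {n : ℕ} {η : Fin (n + 1) → Measure ℝ}
    [∀ j, IsProbabilityMeasure (η j)] (hη : ∀ j, Integrable (fun t : ℝ => t) (η j))
    (ε s : ℝ) (w : Fin (n + 1) → ℝ) (i : Fin (n + 1)) (h : s * w i * ∫ t, t ∂η i ≤ ε * |w i|) :
    ∫ x, max 0 (oatHingeArg ε s (update w i 0) x) ∂Measure.pi η ≤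
      ∫ x, max 0 (oatHingeArg ε s w x) ∂Measure.pi η := by
  simp only [oatHingeArg_update_zero, fun x => oatHingeArg_eq_removeNth_add ε s w x i]
  exact integral_max_zero_le_integral_max_zero_pi i (hη i)
    (integrable_oatHingeArg (fun j => hη _) ε s _) h

theorem integral_jointMeasure {d : ℕ} (ηp ηn : Fin d → Measure ℝ) {q : ℝ≥0∞} (hq : q ≤ 1)
    {f : (Fin d → ℝ) × ℝ → ℝ} (hp : Integrable (fun x => f (x, 1)) (Measure.pi ηp))
    (hn : Integrable (fun x => f (x, -1)) (Measure.pi ηn)) :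
    ∫ p, f p ∂jointMeasure ηp ηn q =
      q.toReal * ∫ x, f (x, 1) ∂Measure.pi ηp + (1 - q).toReal * ∫ x, f (x, -1) ∂Measure.pi ηn := by
  have ep := measurableEmbedding_prod_mk_right (β := Fin d → ℝ) (1 : ℝ)
  have en := measurableEmbedding_prod_mk_right (β := Fin d → ℝ) (-1 : ℝ)
  rw [jointMeasure, integral_add_measure, integral_smul_measure, integral_smul_measure,
    ep.integral_map, en.integral_map]
  · rfl
  · exact (ep.integrable_map_iff.2 hp).smul_measure (ne_top_of_le_ne_top ENNReal.one_ne_top hq)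
  · exact (en.integrable_map_iff.2 hn).smul_measure
      (ne_top_of_le_ne_top ENNReal.one_ne_top tsub_le_self)

theorem oatLoss_jointMeasure {d : ℕ} (ηp ηn : Fin d → Measure ℝ)
    [∀ j, IsProbabilityMeasure (ηp j)] [∀ j, IsProbabilityMeasure (ηn j)]
    {q : ℝ≥0∞} (hq : q ≤ 1) (lam ε : ℝ)
    (hip : ∀ j, Integrable (fun t : ℝ => t) (ηp j)) (hin : ∀ j, Integrable (fun t : ℝ => t) (ηn j))
    (w : Fin d → ℝ) :
    oatLoss (jointMeasure ηp ηn q) lam ε w =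
      q.toReal * ∫ x, max 0 (oatHingeArg ε 1 w x) ∂Measure.pi ηp +
        (1 - q).toReal * ∫ x, max 0 (oatHingeArg ε (-1) w x) ∂Measure.pi ηn +
          lam / 2 * ∑ j, w j ^ 2 := by
  rw [oatLoss, integral_jointMeasure ηp ηn hq
    ((integrable_zero _ _ _).sup (integrable_oatHingeArg hip ε 1 w))
    ((integrable_zero _ _ _).sup (integrable_oatHingeArg hin ε (-1) w))]
  rfl

theorem oatLoss_update_zero_add_le {n : ℕ} (ηp ηn : Fin (n + 1) → Measure ℝ)
    [∀ j, IsProbabilityMeasure (ηp j)] [∀ j, IsProbabilityMeasure (ηn j)]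
    {q : ℝ≥0∞} (hq : q ≤ 1) (lam ε : ℝ)
    (hip : ∀ j, Integrable (fun t : ℝ => t) (ηp j)) (hin : ∀ j, Integrable (fun t : ℝ => t) (ηn j))
    (w : Fin (n + 1) → ℝ) (i : Fin (n + 1)) {m : ℝ}
    (hmeanp : ∫ t, t ∂ηp i = m) (hmeann : ∫ t, t ∂ηn i = -m) (hw : w i * m ≤ ε * |w i|) :
    oatLoss (jointMeasure ηp ηn q) lam ε (update w i 0) + lam / 2 * w i ^ 2 ≤
      oatLoss (jointMeasure ηp ηn q) lam ε w := by
  have hp := integral_max_zero_oatHingeArg_update_zero_le hip ε 1 w i (by rw [hmeanp]; linarith)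
  have hn := integral_max_zero_oatHingeArg_update_zero_le hin ε (-1) w i (by rw [hmeann]; linarith)
  have hreg : ∑ j, update w i 0 j ^ 2 + w i ^ 2 = ∑ j, w j ^ 2 := by
    simp [Fin.sum_univ_succAbove _ i, add_comm]
  have hpq := mul_le_mul_of_nonneg_left hp (ENNReal.toReal_nonneg (a := q))
  have hnq := mul_le_mul_of_nonneg_left hn (ENNReal.toReal_nonneg (a := 1 - q))
  rw [oatLoss_jointMeasure ηp ηn hq lam ε hip hin, oatLoss_jointMeasure ηp ηn hq lam ε hip hin,
    ← hreg]
  linarith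

theorem oat_is_robust_general {d : ℕ} (ηp ηn : Fin d → Measure ℝ)
    [∀ i, IsProbabilityMeasure (ηp i)] [∀ i, IsProbabilityMeasure (ηn i)]
    (q : ℝ≥0∞) (hq : q ≤ 1) (lam ε : ℝ) (hlam : 0 < lam)
    (μv : Fin d → ℝ)
    (hip : ∀ j, Integrable (fun t : ℝ => t) (ηp j))
    (hin : ∀ j, Integrable (fun t : ℝ => t) (ηn j))
    (hmeanp : ∀ i, (∫ t, t ∂(ηp i)) = μv i)
    (hmeann : ∀ i, (∫ t, t ∂(ηn i)) = -(μv i))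
    (wstar : Fin d → ℝ)
    (hmin : ∀ w, oatLoss (jointMeasure ηp ηn q) lam ε wstar ≤
      oatLoss (jointMeasure ηp ηn q) lam ε w)
    (i : Fin d) (hnonrobust : |μv i| ≤ ε) :
    wstar i = 0 := by
  obtain ⟨n, rfl⟩ : ∃ n, d = n + 1 := ⟨d - 1, by have := i.pos; omega⟩
  have hw : wstar i * μv i ≤ ε * |wstar i| := calc
    wstar i * μv i ≤ |wstar i| * |μv i| := (le_abs_self _).trans (abs_mul _ _).le
    _ ≤ ε * |wstar i| := by rw [mul_comm ε]; gcongr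
  have hdrop := oatLoss_update_zero_add_le ηp ηn hq lam ε hip hin wstar i (hmeanp i) (hmeann i) hw
  have hsq : lam / 2 * wstar i ^ 2 ≤ 0 := by linarith [hmin (update wstar i 0)]
  exact pow_eq_zero_iff two_ne_zero |>.1 <|
    le_antisymm (nonpos_of_mul_nonpos_right hsq (half_pos hlam)) (sq_nonneg _)

/-- optimal adversarial training leads to a robust model: any minimizer `w*`
of `L_OAT` puts zero weight on every non-robust feature `i` (one with `|μᵢ| ≤ ε`, where
`E[xᵢ|y] = yμᵢ` and features are conditionally independent given the label). -/
theorem oat_is_robust {d : ℕ} (ηp ηn : Fin d → Measure ℝ)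
    [∀ i, IsProbabilityMeasure (ηp i)] [∀ i, IsProbabilityMeasure (ηn i)]
    (q : ℝ≥0∞) (hq : q ≤ 1) (lam ε : ℝ) (hlam : 0 < lam) (hε : 0 ≤ ε)
    (μv : Fin d → ℝ)
    (hip : ∀ j, Integrable (fun t : ℝ => t) (ηp j))
    (hin : ∀ j, Integrable (fun t : ℝ => t) (ηn j))
    (hmeanp : ∀ i, (∫ t, t ∂(ηp i)) = μv i)
    (hmeann : ∀ i, (∫ t, t ∂(ηn i)) = -(μv i))
    (wstar : Fin d → ℝ)
    (hmin : ∀ w, oatLoss (jointMeasure ηp ηn q) lam ε wstar ≤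
      oatLoss (jointMeasure ηp ηn q) lam ε w)
    (i : Fin d) (hnonrobust : |μv i| ≤ ε) :
    wstar i = 0 :=
  oat_is_robust_general ηp ηn q hq lam ε hlam μv hip hin hmeanp hmeann wstar hmin i hnonrobust
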